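/- arXiv:1501.05345 — 3 statements merged into one kernel-verified Lean document; each statement's English description precedes it below -/
import Mathlib

section
/- Let b ≥ 2 be an integer and z ∈ ℂ \ ℝ. The set {z, z̄} is exponentially b-nonresonant if and only if (Re z)·π/((Im z)·ln b) is irrational. -/
open MeasureTheory Filter Set
open scoped Classical

/-- Base-`b` significand: `S_b(x) ∈ [1,b)` with `|x| = S_b(x)·b^k`; `S_b(0)=0`. -/
noncomputable def significand (b : ℕ) (x : ℝ) : ℝ :=
  if x = 0 then 0 else |x| / (b : ℝ) ^ (Int.log b |x|)

/-- `f` is `b`-Benford. -/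
noncomputable def IsBenford (b : ℕ) (f : ℝ → ℝ) : Prop :=
  ∀ s : ℝ, 1 ≤ s → s < (b : ℝ) →
    Tendsto (fun T : ℝ =>
        (volume {t : ℝ | 0 ≤ t ∧ t ≤ T ∧ significand b (f t) ≤ s}).toReal / T)
      atTop (nhds (Real.logb b s))

/-- A subset of the circle `ℝ/ℤ` is an arc if it is the image of an interval. -/
def IsArc (J : Set UnitAddCircle) : Prop :=
  ∃ a c : ℝ, J = (fun x : ℝ => (x : UnitAddCircle)) '' Set.Ico a c

/-- `f` is continuously uniformly distributed mod 1. -/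
noncomputable def CUDMod1 (f : ℝ → ℝ) : Prop :=
  ∀ J : Set UnitAddCircle, IsArc J →
    Tendsto (fun T : ℝ =>
        (volume {t : ℝ | 0 ≤ t ∧ t ≤ T ∧ ((f t : UnitAddCircle) ∈ J)}).toReal / T)
      atTop (nhds ((volume J).toReal))

/-- A sequence (indexed from 1) is uniformly distributed mod 1. -/
noncomputable def UDMod1 (x : ℕ → ℝ) : Prop :=
  ∀ J : Set UnitAddCircle, IsArc J →
    Tendsto (fun N : ℕ =>
        ((Finset.Icc 1 N).filter (fun n => ((x n : UnitAddCircle) ∈ J))).card / (N : ℝ))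
      atTop (nhds ((volume J).toReal))

/-- The set `Δ_W` associated with `W ⊆ ℂ`. -/
noncomputable def deltaSet (W : Set ℂ) : Set ℝ :=
  {x | ∃ z ∈ W, ∃ w ∈ W, x = 1 + (Complex.arg z - Complex.arg w) / (2 * Real.pi)}

/-- `W ⊆ ℂ` is `b`-nonresonant. -/
noncomputable def BNonresonant (b : ℕ) (W : Set ℂ) : Prop :=
  ∀ r : ℝ, 0 < r → (W ∩ {z | ‖z‖ = r}).Nonempty →
    (deltaSet (W ∩ {z | ‖z‖ = r}) ∩ Set.range ((↑) : ℚ → ℝ) = {1}) ∧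
    Real.logb b r ∉ Submodule.span ℚ (deltaSet (W ∩ {z | ‖z‖ = r}))

/-- `Z ⊆ ℂ` is exponentially `b`-nonresonant. -/
noncomputable def ExpBNonresonant (b : ℕ) (Z : Set ℂ) : Prop :=
  ∃ t : ℝ, 0 ≤ t ∧ BNonresonant b ((fun z => Complex.exp (t * z)) '' Z)

/-- The spectrum (set of complex eigenvalues) of a real square matrix. -/
noncomputable def realSpectrum {d : ℕ} (A : Matrix (Fin d) (Fin d) ℝ) : Set ℂ :=
  spectrum ℂ (A.map (algebraMap ℝ ℂ))


/-! For `w = exp (t z)` the pair `{w, w̄}` lies on the circle of radius `e^{t Re z}`, and `Δ`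
consists of `1` and `1 ± arg w / π`, where `arg w / π ≡ t Im z / π (mod 2)`. Hence
`span_ℚ Δ = span_ℚ {1, t Im z / π}`, while `log_b |w| = t Re z / ln b`. If
`Re z π / (Im z ln b) = q` is rational, then `t Re z / ln b = q · (t Im z / π)` lies in that span
for every `t`. If it is irrational, the `t` for which `t Im z / π` is rational or
`t Re z / ln b ∈ span_ℚ {1, t Im z / π}` form a countable set, so some `t > 0` avoids it. -/

open Complex ComplexConjugate

theorem Submodule.span_one_pair_add_intCast {K : Type*} [DivisionRing K] [CharZero K]
    (x : K) (n : ℤ) : span ℚ {1, x + n} = span ℚ {(1 : K), x} := by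
  have intCast_mem : ∀ s : Set K, 1 ∈ s → (n : K) ∈ span ℚ s := fun s hs => by
    simpa [Rat.smul_def] using smul_mem (span ℚ s) (n : ℚ) (subset_span hs)
  have snd_mem : ∀ y : K, y ∈ span ℚ {1, y} := fun y => subset_span (by simp)
  apply le_antisymm <;>
    simp only [span_le, insert_subset_iff, singleton_subset_iff, SetLike.mem_coe]
  · exact ⟨subset_span (by simp), add_mem (snd_mem x) (intCast_mem _ (mem_insert _ _))⟩
  · exact ⟨subset_span (by simp),
      by simpa using sub_mem (snd_mem (x + n)) (intCast_mem _ (mem_insert _ _))⟩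

lemma exists_pos_irrational_mul_and_notMem_span {a c : ℝ} (h : Irrational (c / a)) :
    ∃ t : ℝ, 0 < t ∧ Irrational (t * a) ∧ t * c ∉ Submodule.span ℚ {1, t * a} := by
  have ha : a ≠ 0 := by rintro rfl; simp at h
  -- `t * a = q` forces `t = q / a`; `t * c = p + q * (t * a)` forces `t = p / (c - q * a)`.
  set bad : Set ℝ :=
    range (fun q : ℚ => q / a) ∪ range (fun pq : ℚ × ℚ => pq.1 / (c - pq.2 * a))
  have hcount : bad.Countable := (countable_range _).union (countable_range _)
  obtain ⟨t, ht, htbad⟩ :=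
    (hcount.dense_compl ℝ).inter_open_nonempty (Ioi 0) isOpen_Ioi nonempty_Ioi
  refine ⟨t, ht, fun ⟨q, hq⟩ => htbad (Or.inl ⟨q, by field_simp; linarith⟩),
    fun hmem => ?_⟩
  obtain ⟨p, q, hpq⟩ := Submodule.mem_span_pair.mp hmem
  rw [Rat.smul_def, Rat.smul_def] at hpq
  have hcq : c - q * a ≠ 0 := fun h0 => h.ne_rat q (by field_simp; linarith)
  exact htbad (Or.inr ⟨(p, q), by field_simp; linarith⟩)

lemma Complex.exists_arg_exp_eq_im_add (w : ℂ) :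
    ∃ k : ℤ, arg (exp w) = w.im + 2 * Real.pi * k :=
  ⟨-toIocDiv Real.two_pi_pos (-Real.pi) w.im, by
    have := toIocMod_sub_self_eq_mul Real.two_pi_pos (-Real.pi) w.im
    rw [arg_exp]; push_cast; linarith⟩

lemma bNonresonant_iff_of_forall_norm_eq {b : ℕ} {W : Set ℂ} {r : ℝ} (hr : 0 < r)
    (hW : ∀ w ∈ W, ‖w‖ = r) (hne : W.Nonempty) :
    BNonresonant b W ↔ deltaSet W ∩ range ((↑) : ℚ → ℝ) = {1} ∧
      Real.logb b r ∉ Submodule.span ℚ (deltaSet W) := by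
  have hWr : W ∩ {z | ‖z‖ = r} = W := inter_eq_left.mpr hW
  refine ⟨fun h => by simpa [hWr] using h r hr (by rwa [hWr]), fun h s _ ⟨w, hw, hws⟩ => ?_⟩
  obtain rfl : s = r := hws.symm.trans (hW w hw)
  rwa [hWr]

lemma deltaSet_singleton (w : ℂ) : deltaSet {w} = {1} := by
  ext; simp [deltaSet, eq_comm]

lemma deltaSet_pair_conj {w : ℂ} (hw : arg w ≠ Real.pi) :
    deltaSet {w, conj w} = {1, 1 + arg w / Real.pi, 1 - arg w / Real.pi} := by
  have hπ := Real.pi_ne_zero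
  ext x
  simp only [deltaSet, mem_insert_iff, mem_singleton_iff, exists_eq_or_imp,
    exists_eq_left, arg_conj, if_neg hw]
  constructor
  · rintro ((rfl | rfl) | (rfl | rfl)) <;> [left; (right; left); (right; right); left] <;>
      field_simp <;> ring
  · rintro (rfl | rfl | rfl) <;> [(left; left); (left; right); (right; left)] <;>
      field_simp <;> ring

lemma span_deltaSet_pair_conj (w : ℂ) :
    Submodule.span ℚ (deltaSet {w, conj w}) = Submodule.span ℚ {1, arg w / Real.pi} := by
  by_cases hw : arg w = Real.pi
  · have hconj : conj w = w := conj_eq_iff_im.mpr (arg_eq_pi_iff.mp hw).2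
    simp [hconj, hw, deltaSet_singleton, Real.pi_ne_zero]
  rw [deltaSet_pair_conj hw]
  set x := arg w / Real.pi
  have hx : x ∈ Submodule.span ℚ {1, x} := Submodule.subset_span (by simp)
  have hx' : 1 + x ∈ Submodule.span ℚ {1, 1 + x, 1 - x} := Submodule.subset_span (by simp)
  apply le_antisymm <;>
    simp only [Submodule.span_le, insert_subset_iff, singleton_subset_iff, SetLike.mem_coe]
  · exact ⟨Submodule.subset_span (by simp), add_mem (Submodule.subset_span (by simp)) hx,
      sub_mem (Submodule.subset_span (by simp)) hx⟩
  · exact ⟨Submodule.subset_span (by simp),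
      by simpa using sub_mem hx' (Submodule.subset_span (mem_insert _ _))⟩

lemma deltaSet_pair_conj_inter_range_ratCast {w : ℂ} (h : Irrational (arg w / Real.pi)) :
    deltaSet {w, conj w} ∩ range ((↑) : ℚ → ℝ) = {1} := by
  have hw : arg w ≠ Real.pi := fun hw => h.ne_one (by simp [hw, Real.pi_ne_zero])
  rw [deltaSet_pair_conj hw]
  ext y
  simp only [mem_inter_iff, mem_insert_iff, mem_singleton_iff, mem_range]
  refine ⟨?_, fun hy => ⟨Or.inl hy, 1, by simp [hy]⟩⟩
  rintro ⟨rfl | rfl | rfl, q, hq⟩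
  · rfl
  · exact absurd ⟨q - 1, by push_cast; linarith⟩ h
  · exact absurd ⟨1 - q, by push_cast; linarith⟩ h

lemma image_exp_ofReal_mul_pair_conj (t : ℝ) (z : ℂ) :
    (fun u => exp (t * u)) '' {z, conj z} = {exp (t * z), conj (exp (t * z))} := by
  rw [image_pair, ← exp_conj, map_mul, conj_ofReal]

lemma exists_arg_exp_ofReal_mul_div_pi (t : ℝ) (z : ℂ) :
    ∃ k : ℤ, arg (exp (t * z)) / Real.pi = t * z.im / Real.pi + (2 * k : ℤ) := by
  obtain ⟨k, hk⟩ := exists_arg_exp_eq_im_add (t * z)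
  refine ⟨k, ?_⟩
  rw [hk, im_ofReal_mul]
  field_simp [Real.pi_ne_zero]
  push_cast
  ring

lemma span_deltaSet_exp_pair_conj (t : ℝ) (z : ℂ) :
    Submodule.span ℚ (deltaSet {exp (t * z), conj (exp (t * z))}) =
      Submodule.span ℚ {1, t * z.im / Real.pi} := by
  obtain ⟨k, hk⟩ := exists_arg_exp_ofReal_mul_div_pi t z
  rw [span_deltaSet_pair_conj, hk, Submodule.span_one_pair_add_intCast]

lemma bNonresonant_exp_pair_conj_iff (b : ℕ) (t : ℝ) (z : ℂ) :
    BNonresonant b {exp (t * z), conj (exp (t * z))} ↔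
      deltaSet {exp (t * z), conj (exp (t * z))} ∩ range ((↑) : ℚ → ℝ) = {1} ∧
      t * z.re / Real.log b ∉ Submodule.span ℚ {1, t * z.im / Real.pi} := by
  have hnorm : ∀ w ∈ ({exp (t * z), conj (exp (t * z))} : Set ℂ),
      ‖w‖ = Real.exp (t * z.re) := by
    rintro w (rfl | rfl) <;> simp [norm_exp]
  rw [bNonresonant_iff_of_forall_norm_eq (Real.exp_pos _) hnorm (insert_nonempty _ _),
    span_deltaSet_exp_pair_conj, Real.logb, Real.log_exp]

theorem expNonresonant_pair_iff_general (b : ℕ) (z : ℂ) (hz : z.im ≠ 0) :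
    ExpBNonresonant b {z, (starRingEnd ℂ) z} ↔
      Irrational (z.re * Real.pi / (z.im * Real.log b)) := by
  simp only [ExpBNonresonant, image_exp_ofReal_mul_pair_conj, bNonresonant_exp_pair_conj_iff]
  constructor
  · rintro ⟨t, -, -, hspan⟩ ⟨q, hq⟩
    have hlin : t * z.re / Real.log b = q • (t * z.im / Real.pi) := by
      rw [Rat.smul_def, hq]
      field_simp
    exact hspan (hlin ▸ Submodule.smul_mem _ _ (Submodule.subset_span (by simp)))
  · intro h
    obtain ⟨t, ht, hirr, hspan⟩ := exists_pos_irrational_mul_and_notMem_span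
      (a := z.im / Real.pi) (c := z.re / Real.log b)
      (by rwa [div_div_div_eq, mul_comm (Real.log b)])
    obtain ⟨k, hk⟩ := exists_arg_exp_ofReal_mul_div_pi t z
    simp only [← mul_div_assoc] at hirr hspan
    exact ⟨t, ht.le,
      deltaSet_pair_conj_inter_range_ratCast (hk ▸ hirr.add_intCast (2 * k)), hspan⟩

/-- for non-real `z`, `{z, z̄}` is exponentially `b`-nonresonant iff
`Re z · π / (Im z · ln b)` is irrational. -/
theorem expNonresonant_pair_iff (b : ℕ) (hb : 2 ≤ b) (z : ℂ) (hz : z.im ≠ 0) :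
    ExpBNonresonant b {z, (starRingEnd ℂ) z} ↔
      Irrational (z.re * Real.pi / (z.im * Real.log b)) :=
  expNonresonant_pair_iff_general b z hz
end

section
/- Let b ≥ 2 be an integer and let Z ⊂ ℂ be countable, symmetric with respect to the real axis, and exponentially b-nonresonant. Then the set {t ≥ 0 : e^{tZ} is b-resonant} is countable. -/
open MeasureTheory Filter Set
open scoped Classical

/-! The argument of `e^{tu}` is `t · im u` modulo `2π`, and `e^{tu}` lies on the circle of radius
`e^{t · re u}`. So for `t > 0` the set `Δ` of `e^{tZ} ∩ e^{tx} S¹` is, modulo `ℤ`, the set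
`1 + t (im u - im v) / 2π` for `u, v ∈ Z` on the line `re = x`. A resonance of the first kind
therefore gives `t · d / 2π ∈ ℚ` for a nonzero difference `d = im u - im v`, and one of the second
kind gives `t (x / log b - s / 2π) ∈ ℚ` for some `s` in the `ℚ`-span of these differences. This is
a countable family of frequencies `a`, none of them `0`, since `a = 0` would make `e^{t₀Z}`
resonant at a nonresonant time `t₀`; and for `a ≠ 0` only countably many `t` have `t a ∈ ℚ`. -/

open scoped Real

theorem Set.Countable.submodule_span {R M : Type*} [Semiring R] [Countable R] [AddCommMonoid M]
    [Module R M] {s : Set M} (hs : s.Countable) : (Submodule.span R s : Set M).Countable := by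
  have := hs.to_subtype
  rw [← Subtype.range_coe (s := s)]
  exact Set.countable_coe_iff.mp
    (inferInstanceAs (Countable (Submodule.span R (range ((↑) : s → M)))))

theorem countable_setOf_mul_eq_ratCast {a : ℝ} (ha : a ≠ 0) :
    {t : ℝ | ∃ q : ℚ, t * a = q}.Countable :=
  (countable_range fun q : ℚ => (q : ℝ) / a).mono <| by
    rintro t ⟨q, hq⟩
    exact ⟨q, show (q : ℝ) / a = t by rw [← hq, mul_div_cancel_right₀ t ha]⟩

namespace Complex

theorem exists_int_arg_exp_eq (w : ℂ) : ∃ k : ℤ, arg (exp w) = w.im + 2 * π * k :=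
  ⟨-toIocDiv Real.two_pi_pos (-π) w.im, by
    rw [arg_exp, ← self_sub_toIocDiv_zsmul, zsmul_eq_mul]; push_cast; ring⟩

theorem norm_exp_ofReal_mul (t : ℝ) (z : ℂ) : ‖exp (t * z)‖ = Real.exp (t * z.re) := by
  rw [norm_exp, re_ofReal_mul]

theorem exists_int_one_add_arg_exp_sub_arg_exp (t : ℝ) (u v : ℂ) :
    ∃ m : ℤ, 1 + (arg (exp (t * u)) - arg (exp (t * v))) / (2 * π)
      = m + t * (u.im - v.im) / (2 * π) := by
  obtain ⟨k, hk⟩ := exists_int_arg_exp_eq (t * u)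
  obtain ⟨l, hl⟩ := exists_int_arg_exp_eq (t * v)
  refine ⟨1 + k - l, ?_⟩
  rw [hk, hl, im_ofReal_mul, im_ofReal_mul]
  push_cast
  field_simp
  ring

end Complex

open Complex

def imDiffs (S : Set ℂ) : Set ℝ := image2 (fun u v => u.im - v.im) S S

theorem one_mem_deltaSet {W : Set ℂ} (hW : W.Nonempty) : 1 ∈ deltaSet W := by
  obtain ⟨w, hw⟩ := hW
  exact ⟨w, hw, w, hw, by ring⟩

theorem deltaSet_mono {W W' : Set ℂ} (h : W ⊆ W') : deltaSet W ⊆ deltaSet W' := by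
  rintro _ ⟨z, hz, w, hw, rfl⟩
  exact ⟨z, h hz, w, h hw, rfl⟩

theorem span_deltaSet_image_exp (t : ℝ) {S : Set ℂ} (hS : S.Nonempty) :
    Submodule.span ℚ (deltaSet ((fun z => exp (t * z)) '' S))
      = Submodule.span ℚ (insert 1 ((fun d => t / (2 * π) * d) '' imDiffs S)) := by
  have one_mem := one_mem_deltaSet (hS.image fun z => exp (t * z))
  have int_mem {p : Submodule ℚ ℝ} (h1 : (1 : ℝ) ∈ p) (m : ℤ) : (m : ℝ) ∈ p := by
    rw [← zsmul_one]; exact zsmul_mem h1 m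
  apply le_antisymm
  · rw [Submodule.span_le]
    rintro _ ⟨_, ⟨u, hu, rfl⟩, _, ⟨v, hv, rfl⟩, rfl⟩
    obtain ⟨m, hm⟩ := exists_int_one_add_arg_exp_sub_arg_exp t u v
    rw [hm, mul_div_right_comm]
    exact add_mem (int_mem (Submodule.subset_span (mem_insert _ _)) m)
      (Submodule.subset_span (mem_insert_of_mem _ ⟨_, ⟨u, hu, v, hv, rfl⟩, rfl⟩))
  · rw [Submodule.span_le, insert_subset_iff]
    refine ⟨Submodule.subset_span one_mem, ?_⟩
    rintro _ ⟨_, ⟨u, hu, v, hv, rfl⟩, rfl⟩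
    obtain ⟨m, hm⟩ := exists_int_one_add_arg_exp_sub_arg_exp t u v
    have h : t / (2 * π) * (u.im - v.im)
        = 1 + (arg (exp (t * u)) - arg (exp (t * v))) / (2 * π) - m := by rw [hm]; ring
    dsimp only
    rw [h]
    exact sub_mem (Submodule.subset_span ⟨_, ⟨u, hu, rfl⟩, _, ⟨v, hv, rfl⟩, rfl⟩)
      (int_mem (Submodule.subset_span one_mem) m)

theorem mem_span_deltaSet_image_exp_iff {t y : ℝ} {S : Set ℂ} (hS : S.Nonempty) :
    y ∈ Submodule.span ℚ (deltaSet ((fun z => exp (t * z)) '' S))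
      ↔ ∃ q : ℚ, ∃ s ∈ Submodule.span ℚ (imDiffs S), y = q + t / (2 * π) * s := by
  rw [span_deltaSet_image_exp t hS, Submodule.mem_span_insert,
    show (fun d => t / (2 * π) * d) = LinearMap.mulLeft ℚ (t / (2 * π)) from rfl,
    Submodule.span_image]
  simp only [Submodule.mem_map, LinearMap.mulLeft_apply, Rat.smul_one_eq_cast]
  constructor
  · rintro ⟨q, _, ⟨s, hs, rfl⟩, rfl⟩; exact ⟨q, s, hs, rfl⟩
  · rintro ⟨q, s, hs, rfl⟩; exact ⟨q, _, ⟨s, hs, rfl⟩, rfl⟩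

theorem image_exp_inter_re_subset (t : ℝ) (Z : Set ℂ) (x : ℝ) :
    (fun z => exp (t * z)) '' (Z ∩ Complex.re ⁻¹' {x})
      ⊆ (fun z => exp (t * z)) '' Z ∩ {w | ‖w‖ = Real.exp (t * x)} := by
  rintro _ ⟨z, ⟨hz, rfl⟩, rfl⟩
  exact ⟨⟨z, hz, rfl⟩, norm_exp_ofReal_mul t z⟩

theorem image_exp_inter_norm_eq {t : ℝ} (ht : 0 < t) (Z : Set ℂ) (x : ℝ) :
    (fun z => exp (t * z)) '' Z ∩ {w | ‖w‖ = Real.exp (t * x)}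
      = (fun z => exp (t * z)) '' (Z ∩ Complex.re ⁻¹' {x}) := by
  refine Subset.antisymm ?_ (image_exp_inter_re_subset t Z x)
  rintro _ ⟨⟨z, hz, rfl⟩, hw⟩
  rw [mem_ofPred_eq, norm_exp_ofReal_mul, Real.exp_eq_exp, mul_right_inj' ht.ne'] at hw
  exact ⟨z, ⟨hz, hw⟩, rfl⟩

theorem exists_mul_eq_ratCast_of_deltaSet_inter_range_ne {t x : ℝ} {S : Set ℂ}
    (hSx : S ⊆ Complex.re ⁻¹' {x}) (hS : S.Nonempty)
    (h : deltaSet ((fun z => exp (t * z)) '' S) ∩ range ((↑) : ℚ → ℝ) ≠ {1}) :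
    ∃ d ∈ imDiffs S \ {0}, ∃ q : ℚ, t * (d / (2 * π)) = q := by
  have one_mem : (1 : ℝ) ∈ deltaSet ((fun z => exp (t * z)) '' S) ∩ range ((↑) : ℚ → ℝ) :=
    ⟨one_mem_deltaSet (hS.image _), 1, Rat.cast_one⟩
  rw [Ne, eq_singleton_iff_unique_mem] at h
  push Not at h
  obtain ⟨_, ⟨⟨_, ⟨u, hu, rfl⟩, _, ⟨v, hv, rfl⟩, rfl⟩, q, hq⟩, hne⟩ := h one_mem
  have huv : u ≠ v := by
    rintro rfl
    exact hne (by ring)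
  have hd : u.im - v.im ≠ 0 :=
    sub_ne_zero.2 fun him => huv (Complex.ext ((hSx hu).trans (hSx hv).symm) him)
  obtain ⟨m, hm⟩ := exists_int_one_add_arg_exp_sub_arg_exp t u v
  refine ⟨_, ⟨⟨u, hu, v, hv, rfl⟩, hd⟩, q - m, ?_⟩
  rw [Rat.cast_sub, Rat.cast_intCast, hq, hm, mul_div_assoc]
  ring

/-- On each vertical line `re = x` meeting `Z`: the first family detects rational points of `Δ`
other than `1`, the second detects `log_b r ∈ span_ℚ Δ`. -/
def resonanceFrequencies (b : ℕ) (Z : Set ℂ) : Set ℝ :=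
  ⋃ x ∈ Complex.re '' Z,
    (fun d => d / (2 * π)) '' (imDiffs (Z ∩ Complex.re ⁻¹' {x}) \ {0}) ∪
      (fun s => x / Real.log b - s / (2 * π)) ''
        Submodule.span ℚ (imDiffs (Z ∩ Complex.re ⁻¹' {x}))

theorem countable_resonanceFrequencies (b : ℕ) {Z : Set ℂ} (hZ : Z.Countable) :
    (resonanceFrequencies b Z).Countable := by
  refine (hZ.image _).biUnion fun x _ => ?_
  have hD : (imDiffs (Z ∩ Complex.re ⁻¹' {x})).Countable :=
    (hZ.mono inter_subset_left).image2 (hZ.mono inter_subset_left) _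
  exact ((hD.mono sdiff_subset).image _).union (hD.submodule_span.image _)

theorem exists_mul_eq_ratCast_of_not_bNonresonant {b : ℕ} {t : ℝ} {Z : Set ℂ} (ht : 0 < t)
    (h : ¬BNonresonant b ((fun z => exp (t * z)) '' Z)) :
    ∃ a ∈ resonanceFrequencies b Z, ∃ q : ℚ, t * a = q := by
  simp only [BNonresonant, not_forall, not_and_or] at h
  obtain ⟨r, -, ⟨_, ⟨z₀, hz₀, rfl⟩, hr⟩, hres⟩ := h
  rw [mem_ofPred_eq, norm_exp_ofReal_mul] at hr
  subst hr
  rw [image_exp_inter_norm_eq ht] at hres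
  have hS : (Z ∩ Complex.re ⁻¹' {z₀.re}).Nonempty := ⟨z₀, hz₀, rfl⟩
  have hx : z₀.re ∈ Complex.re '' Z := mem_image_of_mem _ hz₀
  rcases hres with hrat | hlog
  · obtain ⟨d, hd, q, hq⟩ :=
      exists_mul_eq_ratCast_of_deltaSet_inter_range_ne inter_subset_right hS hrat
    exact ⟨_, mem_biUnion hx (Or.inl ⟨d, hd, rfl⟩), q, hq⟩
  · obtain ⟨q, s, hs, hq⟩ := (mem_span_deltaSet_image_exp_iff hS).1 (not_not.1 hlog)
    rw [Real.logb, Real.log_exp] at hq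
    refine ⟨_, mem_biUnion hx (Or.inr ⟨s, hs, rfl⟩), q, ?_⟩
    rw [mul_sub, ← mul_div_assoc, hq]
    ring

theorem zero_notMem_resonanceFrequencies {b : ℕ} {t : ℝ} {Z : Set ℂ}
    (h : BNonresonant b ((fun z => exp (t * z)) '' Z)) : 0 ∉ resonanceFrequencies b Z := by
  simp only [resonanceFrequencies, mem_iUnion, mem_union, mem_image]
  rintro ⟨_, ⟨z₀, hz₀, rfl⟩, ⟨d, hd, hd0⟩ | ⟨s, hs, hs0⟩⟩
  · exact hd.2 (div_eq_zero_iff.1 hd0 |>.resolve_right (by positivity))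
  have hS : (Z ∩ Complex.re ⁻¹' {z₀.re}).Nonempty := ⟨z₀, hz₀, rfl⟩
  have hsub := image_exp_inter_re_subset t Z z₀.re
  refine (h _ (Real.exp_pos _) ((hS.image _).mono hsub)).2
    (Submodule.span_mono (deltaSet_mono hsub) ((mem_span_deltaSet_image_exp_iff hS).2 ⟨0, s, hs, ?_⟩))
  rw [Real.logb, Real.log_exp, mul_div_assoc, sub_eq_zero.1 hs0]
  push_cast
  ring

theorem resonant_times_countable_general (b : ℕ) (Z : Set ℂ)
    (hc : Z.Countable) (hnr : ExpBNonresonant b Z) :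
    Set.Countable {t : ℝ | 0 ≤ t ∧ ¬ BNonresonant b ((fun z => Complex.exp (t * z)) '' Z)} := by
  obtain ⟨t₀, -, h₀⟩ := hnr
  have hA := countable_resonanceFrequencies b hc
  refine ((countable_singleton 0).union (hA.biUnion fun a ha =>
    countable_setOf_mul_eq_ratCast (ne_of_mem_of_not_mem ha
      (zero_notMem_resonanceFrequencies h₀)))).mono ?_
  rintro t ⟨ht, hres⟩
  rcases ht.eq_or_lt with rfl | ht
  · exact Or.inl rfl
  obtain ⟨a, ha, q, hq⟩ := exists_mul_eq_ratCast_of_not_bNonresonant ht hres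
  exact Or.inr (mem_biUnion ha ⟨q, hq⟩)

/-- for countable symmetric exponentially `b`-nonresonant `Z`, the set of
`t ≥ 0` with `e^{tZ}` `b`-resonant is countable. -/
theorem resonant_times_countable (b : ℕ) (hb : 2 ≤ b) (Z : Set ℂ)
    (hc : Z.Countable) (hsym : ∀ z ∈ Z, (starRingEnd ℂ) z ∈ Z)
    (hnr : ExpBNonresonant b Z) :
    Set.Countable {t : ℝ | 0 ≤ t ∧ ¬ BNonresonant b ((fun z => Complex.exp (t * z)) '' Z)} :=
  resonant_times_countable_general b Z hc hnr
end

section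
/- Let φ be the linear flow on ℝ² generated by [[1, −2π/ln 10],[2π/ln 10, 1]]. Then the function t ↦ |φ_t| (Euclidean operator norm) equals e^t for all t, and in particular is b-Benford for every integer base b ≥ 2, even though the spectrum {1 ± 2πi/ln 10} of the generator is exponentially 10-resonant. -/
open MeasureTheory Filter Set
open scoped Classical

/-!
The generator is the matrix of multiplication by `w = 1 + (2π / ln 10) i` on `ℂ ≅ ℝ²`, so `φ_t` is
multiplication by `e^{tw}`, a rotation scaled by `|e^{tw}| = e^t`; hence `‖φ_t‖ = e^t`. Since
`log_b e^t = t / ln b`, the Benford property of `e^t` is the equidistribution of `t / ln b` modulo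
one, which holds because the density of a periodic set is its density over one period. The
resonance comes from `ln 10 · Im w = 2π · Re w`: for `u = e^{tw}` the quantity
`log₁₀ |u| = t / ln 10` is a rational combination of `1` and `(arg u - arg ū) / 2π`.
-/

open Topology

section MatrixFlow

open Complex

theorem continuous_leftMulMatrix_basisOneI : Continuous (Algebra.leftMulMatrix basisOneI) :=
  (Algebra.leftMulMatrix basisOneI).toLinearMap.continuous_of_finiteDimensional

theorem exp_leftMulMatrix_basisOneI (z : ℂ) :
    NormedSpace.exp (Algebra.leftMulMatrix basisOneI z) =
      Algebra.leftMulMatrix basisOneI (exp z) := by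
  rw [exp_eq_exp_ℂ]
  open scoped Matrix.Norms.Operator in
  exact (NormedSpace.map_exp _ continuous_leftMulMatrix_basisOneI z).symm

theorem toEuclideanCLM_leftMulMatrix_basisOneI_repr (z w : ℂ) :
    Matrix.toEuclideanCLM (𝕜 := ℝ) (Algebra.leftMulMatrix basisOneI z)
        (orthonormalBasisOneI.repr w) = orthonormalBasisOneI.repr (z * w) := by
  apply WithLp.ofLp_injective
  rw [Matrix.ofLp_toEuclideanCLM]
  exact Algebra.leftMulMatrix_mulVec_repr basisOneI z w

theorem norm_toEuclideanCLM_leftMulMatrix_basisOneI (z : ℂ) :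
    ‖Matrix.toEuclideanCLM (𝕜 := ℝ) (Algebra.leftMulMatrix basisOneI z)‖ = ‖z‖ := by
  refine ContinuousLinearMap.homothety_norm _ fun x => ?_
  obtain ⟨w, rfl⟩ := orthonormalBasisOneI.repr.surjective x
  rw [toEuclideanCLM_leftMulMatrix_basisOneI_repr, LinearIsometryEquiv.norm_map,
    LinearIsometryEquiv.norm_map, norm_mul]

theorem smul_of_fin_two_eq_leftMulMatrix_basisOneI (t a b : ℝ) :
    t • !![a, -b; b, a] = Algebra.leftMulMatrix basisOneI (t * (a + b * I)) := by
  rw [Algebra.leftMulMatrix_complex]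
  ext i j
  fin_cases i <;> fin_cases j <;> simp

theorem norm_toEuclideanCLM_exp_smul_of_fin_two (t a b : ℝ) :
    ‖Matrix.toEuclideanCLM (𝕜 := ℝ) (NormedSpace.exp (t • !![a, -b; b, a]))‖ =
      Real.exp (t * a) := by
  rw [smul_of_fin_two_eq_leftMulMatrix_basisOneI, exp_leftMulMatrix_basisOneI,
    norm_toEuclideanCLM_leftMulMatrix_basisOneI, norm_exp]
  simp

end MatrixFlow

section PeriodicDensity

theorem tendsto_intFloor_div_atTop :
    Tendsto (fun x : ℝ => (⌊x⌋ : ℝ) / x) atTop (𝓝 1) :=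
  tendsto_nat_floor_div_atTop.congr' <| (eventually_ge_atTop 0).mono fun _ hx => by
    rw [natCast_floor_eq_intCast_floor hx]

theorem Function.Periodic.tendsto_intervalIntegral_div_atTop {g : ℝ → ℝ} {p : ℝ}
    (hg : Function.Periodic g p) (hp : 0 < p) (h_int : IntervalIntegrable g volume 0 p) :
    Tendsto (fun t => (∫ x in 0..t, g x) / t) atTop (𝓝 ((∫ x in 0..p, g x) / p)) := by
  set G := fun t => ∫ x in 0..t, g x
  have hfloor : Tendsto (fun t : ℝ => (⌊t / p⌋ : ℝ) / t) atTop (𝓝 p⁻¹) := by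
    have := (tendsto_intFloor_div_atTop.comp (tendsto_id.atTop_div_const hp)).div_const p
    rw [one_div] at this
    refine this.congr' ((eventually_ne_atTop 0).mono fun t ht => ?_)
    simp only [Function.comp, id]
    field_simp
  -- `∫ x in 0..t, g x` lies within a bounded distance of `⌊t / p⌋ • G p`
  have hbound : ∀ c : ℝ, Tendsto (fun t => (c + ⌊t / p⌋ • G p) / t) atTop (𝓝 (G p / p)) := by
    intro c
    have := (tendsto_const_nhds (x := c)).div_atTop tendsto_id |>.add (hfloor.mul_const (G p))
    rw [zero_add, ← div_eq_inv_mul] at this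
    refine this.congr' ((eventually_ne_atTop 0).mono fun t ht => ?_)
    simp only [id, zsmul_eq_mul]
    field_simp
  refine tendsto_of_tendsto_of_tendsto_of_le_of_le' (hbound (sInf (G '' Icc 0 p)))
    (hbound (sSup (G '' Icc 0 p))) ?_ ?_ <;>
    filter_upwards [eventually_gt_atTop 0] with t ht <;> gcongr
  · exact hg.sInf_add_zsmul_le_integral_of_pos h_int hp t
  · exact hg.integral_le_sSup_add_zsmul_of_pos h_int hp t

theorem tendsto_measureReal_Icc_inter_div_atTop_of_periodic {S : Set ℝ} {p : ℝ}
    (hS : MeasurableSet S) (hper : ∀ t, t + p ∈ S ↔ t ∈ S) (hp : 0 < p) :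
    Tendsto (fun T => volume.real (Icc 0 T ∩ S) / T) atTop
      (𝓝 (volume.real (Ico 0 p ∩ S) / p)) := by
  have hg : Function.Periodic (S.indicator (1 : ℝ → ℝ)) p := fun t => by
    simp only [Set.indicator, hper, Pi.one_apply]
  have h_int : IntervalIntegrable (S.indicator (1 : ℝ → ℝ)) volume 0 p :=
    (intervalIntegrable_iff_integrableOn_Ioc_of_le hp.le).2
      ((integrableOn_const (C := (1 : ℝ)) measure_Ioc_lt_top.ne).indicator hS)
  have hIcc : ∀ T, 0 ≤ T → ∫ x in 0..T, S.indicator 1 x = volume.real (Icc 0 T ∩ S) := by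
    intro T hT
    rw [intervalIntegral.integral_of_le hT, ← integral_Icc_eq_integral_Ioc,
      setIntegral_indicator hS]
    simp
  have hIco : ∫ x in 0..p, S.indicator 1 x = volume.real (Ico 0 p ∩ S) := by
    rw [intervalIntegral.integral_of_le hp.le, ← integral_Ico_eq_integral_Ioc,
      setIntegral_indicator hS]
    simp
  rw [← hIco]
  exact (hg.tendsto_intervalIntegral_div_atTop hp h_int).congr'
    ((eventually_ge_atTop 0).mono fun T hT => by rw [hIcc T hT])

theorem tendsto_volume_fract_div_le_div_atTop {L c : ℝ} (hL : 0 < L) (hc0 : 0 ≤ c) (hc1 : c < 1) :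
    Tendsto (fun T => (volume {t : ℝ | 0 ≤ t ∧ t ≤ T ∧ Int.fract (t / L) ≤ c}).toReal / T)
      atTop (𝓝 c) := by
  set S := {t : ℝ | Int.fract (t / L) ≤ c}
  have hS : MeasurableSet S := measurableSet_le (by fun_prop) measurable_const
  have hper : ∀ t, t + L ∈ S ↔ t ∈ S := fun t => by
    simp only [S, mem_ofPred_eq, add_div, div_self hL.ne', Int.fract_add_one]
  have hperiod : Ico 0 L ∩ S = Icc 0 (c * L) := by
    ext t
    have hcL : c * L < L := by nlinarith
    have hfract : ∀ t, 0 ≤ t → t < L → (Int.fract (t / L) ≤ c ↔ t ≤ c * L) := fun t h0 hlt => by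
      rw [Int.fract_eq_self.2 ⟨div_nonneg h0 hL.le, (div_lt_one hL).2 hlt⟩, div_le_iff₀ hL]
    simp only [S, mem_inter_iff, mem_Ico, mem_Icc, mem_ofPred_eq]
    exact ⟨fun ⟨⟨h0, hlt⟩, h⟩ => ⟨h0, (hfract t h0 hlt).1 h⟩,
      fun ⟨h0, h⟩ => ⟨⟨h0, h.trans_lt hcL⟩, (hfract t h0 (h.trans_lt hcL)).2 h⟩⟩
  have := tendsto_measureReal_Icc_inter_div_atTop_of_periodic hS hper hL
  rw [hperiod, Real.volume_real_Icc_of_le (by positivity), sub_zero,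
    mul_div_cancel_right₀ _ hL.ne'] at this
  have hset : ∀ T, {t | 0 ≤ t ∧ t ≤ T ∧ Int.fract (t / L) ≤ c} = Icc 0 T ∩ S := fun T => by
    ext t
    simp [S, and_assoc]
  simpa only [hset, measureReal_def] using this

end PeriodicDensity

section Benford

theorem significand_eq_rpow_fract_logb {b : ℕ} (hb : 1 < b) {x : ℝ} (hx : 0 < x) :
    significand b x = (b : ℝ) ^ Int.fract (Real.logb b x) := by
  have hb' : (0 : ℝ) < b := by positivity
  rw [significand, if_neg hx.ne', abs_of_pos hx, ← Real.floor_logb_natCast hx.le, Int.fract,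
    Real.rpow_sub hb', Real.rpow_logb hb' (by exact_mod_cast hb.ne') hx, Real.rpow_intCast]

theorem significand_le_iff_fract_logb_le {b : ℕ} (hb : 1 < b) {x s : ℝ} (hx : 0 < x)
    (hs : 0 < s) : significand b x ≤ s ↔ Int.fract (Real.logb b x) ≤ Real.logb b s := by
  rw [significand_eq_rpow_fract_logb hb hx, Real.le_logb_iff_rpow_le (by exact_mod_cast hb) hs]

theorem isBenford_exp {b : ℕ} (hb : 1 < b) : IsBenford b Real.exp := by
  intro s hs1 hsb
  have hb' : (1 : ℝ) < b := by exact_mod_cast hb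
  have hiff : ∀ t, significand b (Real.exp t) ≤ s ↔ Int.fract (t / Real.log b) ≤ Real.logb b s :=
    fun t => by
      rw [significand_le_iff_fract_logb_le hb (Real.exp_pos t) (by linarith), Real.logb,
        Real.log_exp]
  simp only [hiff]
  exact tendsto_volume_fract_div_le_div_atTop (Real.log_pos hb') (Real.logb_nonneg hb' hs1)
    ((Real.logb_lt_iff_lt_rpow hb' (by linarith)).2 (by rwa [Real.rpow_one]))

end Benford

section Resonance

open Complex

theorem Complex.exists_arg_exp_eq_im_add_int_mul (z : ℂ) :
    ∃ n : ℤ, arg (exp z) = z.im + n * (2 * Real.pi) :=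
  ⟨-toIocDiv Real.two_pi_pos (-Real.pi) z.im, by
    rw [Complex.arg_exp, ← self_sub_toIocDiv_zsmul, zsmul_eq_mul]
    push_cast
    ring⟩

theorem not_expBNonresonant_one_add_two_pi_div_log_mul_I {b : ℕ} (hb : 1 < b) :
    ¬ ExpBNonresonant b
        {(1 : ℂ) + (2 * Real.pi / Real.log b : ℝ) * I,
         (1 : ℂ) - (2 * Real.pi / Real.log b : ℝ) * I} := by
  rintro ⟨t, -, hB⟩
  set θ : ℝ := 2 * Real.pi / Real.log b with hθ
  set u := exp (t * (1 + θ * I))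
  set v := exp (t * (1 - θ * I))
  set S := (fun z => exp (t * z)) '' {1 + θ * I, 1 - θ * I} ∩ {z | ‖z‖ = Real.exp t}
  have hu : u ∈ S := ⟨⟨_, by simp, rfl⟩, by simp [u, norm_exp]⟩
  have hv : v ∈ S := ⟨⟨_, by simp, rfl⟩, by simp [v, norm_exp]⟩
  obtain ⟨n, hn⟩ : ∃ n : ℤ, arg u = t * θ + n * (2 * Real.pi) := by
    simpa using exists_arg_exp_eq_im_add_int_mul (t * (1 + θ * I))
  obtain ⟨m, hm⟩ : ∃ m : ℤ, arg v = -(t * θ) + m * (2 * Real.pi) := by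
    simpa using exists_arg_exp_eq_im_add_int_mul (t * (1 - θ * I))
  have hlogb : Real.logb b (Real.exp t) =
      ((1 / 2 : ℚ) : ℝ) * (1 + (arg u - arg v) / (2 * Real.pi)) +
        (((m - n - 1) / 2 : ℚ) : ℝ) * 1 := by
    have hlog : Real.log b ≠ 0 := (Real.log_pos (by exact_mod_cast hb)).ne'
    rw [hn, hm, Real.logb, Real.log_exp, hθ]
    push_cast
    field_simp
    ring
  refine (hB _ (Real.exp_pos t) ⟨u, hu⟩).2 ?_
  rw [hlogb, ← Rat.smul_def, ← Rat.smul_def]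
  exact add_mem (Submodule.smul_mem _ _ (Submodule.subset_span ⟨u, hu, v, hv, rfl⟩))
    (Submodule.smul_mem _ _ (Submodule.subset_span ⟨u, hu, u, hu, by simp⟩))

end Resonance

/-- for the flow generated by `[[1, −2π/ln 10],[2π/ln 10, 1]]`, the
Euclidean operator norm of `φ_t` equals `e^t` and is Benford in every base, although
the spectrum of the generator is exponentially `10`-resonant. -/
theorem norm_benford_despite_resonance :
    (∀ t : ℝ,
      ‖Matrix.toEuclideanCLM (𝕜 := ℝ)
          (NormedSpace.exp (t • !![1, -(2 * Real.pi / Real.log 10);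
                                     2 * Real.pi / Real.log 10, 1]))‖ = Real.exp t) ∧
    (∀ b : ℕ, 2 ≤ b → IsBenford b (fun t =>
      ‖Matrix.toEuclideanCLM (𝕜 := ℝ)
          (NormedSpace.exp (t • !![1, -(2 * Real.pi / Real.log 10);
                                     2 * Real.pi / Real.log 10, 1]))‖)) ∧
    ¬ ExpBNonresonant 10
        {(1 : ℂ) + (2 * Real.pi / Real.log 10 : ℝ) * Complex.I,
         (1 : ℂ) - (2 * Real.pi / Real.log 10 : ℝ) * Complex.I} := by
  have hnorm := fun t : ℝ =>
    norm_toEuclideanCLM_exp_smul_of_fin_two t 1 (2 * Real.pi / Real.log 10)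
  simp only [mul_one] at hnorm
  refine ⟨hnorm, fun b hb => ?_, ?_⟩
  · simp only [hnorm]
    exact isBenford_exp hb
  · simpa using not_expBNonresonant_one_add_two_pi_div_log_mul_I (b := 10) (by norm_num)
end
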